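/- arXiv:1604.00050 — 3 statements merged into one kernel-verified Lean document; each statement's English description precedes it below -/
import Mathlib

section
/- Let a, k, m, c be real numbers with a > 0 and k > 0. Assume c ≥ 0, m·k ≤ c², and c ≤ 2a − m. Then m ≤ (4a + k − √(8ak + k²))/2. -/
/-- Arithmetic core of Lemma 3.2: the bound on m via the quadratic discriminant. -/
theorem stmt_3 (a k m c : ℝ) (ha : 0 < a) (hk : 0 < k)
    (hc : 0 ≤ c) (h1 : m * k ≤ c ^ 2) (h2 : c ≤ 2 * a - m) :
    m ≤ (4 * a + k - Real.sqrt (8 * a * k + k ^ 2)) / 2 := by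
  set s := Real.sqrt (8 * a * k + k ^ 2) with hs
  have hs2 : s ^ 2 = 8 * a * k + k ^ 2 := Real.sq_sqrt (by nlinarith)
  have hs0 : 0 ≤ s := Real.sqrt_nonneg _
  by_contra h
  push_neg at h
  have hm2a : m ≤ 2 * a := by linarith
  have h3 : m * k ≤ (2 * a - m) ^ 2 := by nlinarith
  have hsk : k < s := by nlinarith
  have hlt : m < (4 * a + k + s) / 2 := by linarith
  nlinarith [mul_pos (by linarith : (0:ℝ) < m - (4 * a + k - s) / 2)
    (by linarith : (0:ℝ) < (4 * a + k + s) / 2 - m)]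
end

section
/- Let B2, b, k, gB, g, m be integers with B2 ≥ 1, b ≥ 1, k ≥ 1, and g ≥ 5. Assume 2(gB − 1) = B2 + b, B2·k ≤ b², m = (gB − 1) + (g − 1), and g − 1 = (gB − 1) + b + k. Then b ≥ 2 and g + 1 ≤ m. -/
/-- Arithmetic content of Lemma 5.1(iv). -/
theorem stmt_13 (B2 b k gB g m : ℤ) (hB2 : 1 ≤ B2) (hb : 1 ≤ b) (hk : 1 ≤ k)
    (hg : 5 ≤ g)
    (h1 : 2 * (gB - 1) = B2 + b)
    (h2 : B2 * k ≤ b ^ 2)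
    (h3 : m = (gB - 1) + (g - 1))
    (h4 : g - 1 = (gB - 1) + b + k) :
    2 ≤ b ∧ g + 1 ≤ m := by
  rcases eq_or_lt_of_le hb with h | h
  · exfalso
    have hB : B2 = 1 := by nlinarith
    have hk1 : k = 1 := by nlinarith
    omega
  · refine ⟨h, ?_⟩
    omega
end

section
/- Let k, b, a, χ, m be integers with k ≥ 2 and b ≥ 2, and set c = b + k. Assume: 6χ ≤ 3k + 18; k + √(8ak + k²) ≤ 6χ (as real numbers, with a ≥ 0); b + k + m ≤ 2a; m·k ≤ c²; and 19k + 18c ≤ m + 36χ. Then c ≤ 8 and k ≤ 4. -/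
/-- Arithmetic chain in the proof of Theorem 5.3 (the adjoint case). -/
theorem stmt_14 (k b a χ m c : ℤ) (hk : 2 ≤ k) (hb : 2 ≤ b) (hc : c = b + k)
    (ha : 0 ≤ a)
    (h1 : 6 * χ ≤ 3 * k + 18)
    (h2 : (k : ℝ) + Real.sqrt (8 * a * k + k ^ 2) ≤ 6 * χ)
    (h3 : b + k + m ≤ 2 * a)
    (h4 : m * k ≤ c ^ 2)
    (h5 : 19 * k + 18 * c ≤ m + 36 * χ) :
    c ≤ 8 ∧ k ≤ 4 := by
  have hs0 : (0:ℝ) ≤ Real.sqrt (8 * a * k + k ^ 2) := Real.sqrt_nonneg _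
  have hkR : (2:ℝ) ≤ (k:ℝ) := by exact_mod_cast hk
  have haR : (0:ℝ) ≤ (a:ℝ) := by exact_mod_cast ha
  have hnn : (0:ℝ) ≤ 8 * a * k + k ^ 2 := by nlinarith
  have h6 : Real.sqrt (8 * a * k + k ^ 2) ≤ 6 * χ - k := by linarith
  have h7 : (8 * a * k + k ^ 2 : ℝ) ≤ (6 * χ - k) ^ 2 := by
    nlinarith [Real.sq_sqrt hnn, hs0, h6]
  have h8 : 8 * a * k + k ^ 2 ≤ (6 * χ - k) ^ 2 := by exact_mod_cast h7
  -- (6χ - k) ≤ 2k + 18 and 6χ - k ≥ 0 (from sqrt nonneg via h2)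
  have h9 : 0 ≤ 6 * χ - k := by
    have : (k:ℝ) ≤ 6 * χ := by linarith
    exact_mod_cast sub_nonneg.mpr this
  have hA : 8 * a * k ≤ 3 * k ^ 2 + 72 * k + 324 := by nlinarith
  have hm : k + 18 * c - 108 ≤ m := by linarith
  have hmc : m + c ≤ 2 * a := by linarith
  have hc8 : c ≤ 8 := by nlinarith [mul_le_mul_of_nonneg_right hmc (by linarith : (0:ℤ) ≤ 4 * k), mul_le_mul_of_nonneg_right hm (by linarith : (0:ℤ) ≤ 4 * k)]
  refine ⟨hc8, ?_⟩
  have hck : k + 2 ≤ c := by linarith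
  nlinarith [mul_le_mul_of_nonneg_right hm (by linarith : (0:ℤ) ≤ k), sq_nonneg (c - 8)]
end
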